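/- Fix reals q₀ > 0, q₁, q₂, z > 0, set v_l := (l+1/2)z, and let N be a nonnegative integer. Define φ_k := e^{(log q₀)/z} ∑_{d≥0,μ≥1} (q₁^d q₂^{d+μ}(-1)^μ/(d!(d+μ)! z^{2d+μ})) μ^k z^k for each k ≥ 0, and assume φ_N ≠ 0. Then lim_{l→∞} v_l^N · ( I²(q;v_l,z) - ∑_{k=0}^{N-1} φ_k v_l^{-k} ) = φ_N, where I²(q;v,z) := e^{(log q₀)/z} ∑_{d≥0,μ≥1} (q₁^d q₂^{d+μ}/(d!(d+μ)! z^{2d+μ})) (-1)^μ v/(v-μz). -/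

import Mathlib

open Filter

/-- The building block I² of the restricted I-function, as a double series over
`(d, μ)` with `μ = p.2 + 1 ≥ 1`. -/
noncomputable def Isq (q₀ q₁ q₂ v z : ℝ) : ℝ :=
  ∑' p : ℕ × ℕ,
    Real.exp (Real.log q₀ / z) *
      (q₁ ^ p.1 * q₂ ^ (p.1 + (p.2 + 1)) /
        ((p.1.factorial : ℝ) * (p.1 + (p.2 + 1)).factorial * z ^ (2 * p.1 + (p.2 + 1)))) *
      ((-1 : ℝ) ^ (p.2 + 1) * v / (v - (p.2 + 1 : ℝ) * z))

/-- The coefficient φ_k of v^{-k} in the asymptotic expansion of I². -/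
noncomputable def phiCoeff (q₀ q₁ q₂ z : ℝ) (k : ℕ) : ℝ :=
  ∑' p : ℕ × ℕ,
    Real.exp (Real.log q₀ / z) *
      (q₁ ^ p.1 * q₂ ^ (p.1 + (p.2 + 1)) * (-1 : ℝ) ^ (p.2 + 1) /
        ((p.1.factorial : ℝ) * (p.1 + (p.2 + 1)).factorial * z ^ (2 * p.1 + (p.2 + 1)))) *
      ((p.2 + 1 : ℝ) ^ k * z ^ k)

noncomputable def aCoef (q₀ q₁ q₂ z : ℝ) (p : ℕ × ℕ) : ℝ :=
  Real.exp (Real.log q₀ / z) *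
    (q₁ ^ p.1 * q₂ ^ (p.1 + (p.2 + 1)) * (-1 : ℝ) ^ (p.2 + 1) /
      ((p.1.factorial : ℝ) * (p.1 + (p.2 + 1)).factorial * z ^ (2 * p.1 + (p.2 + 1))))

lemma geom_tail (v c : ℝ) (hv : v ≠ 0) (hvc : v - c ≠ 0) (N : ℕ) :
    v ^ N * (v / (v - c) - ∑ k ∈ Finset.range N, c ^ k * (v ^ k)⁻¹) = v / (v - c) * c ^ N := by
  induction N with
  | zero => simp
  | succ n ih =>
    rw [Finset.sum_range_succ]
    have hvn : (v : ℝ) ^ n ≠ 0 := pow_ne_zero _ hv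
    have e1 : v ^ (n+1) * (v / (v-c) - (∑ k ∈ Finset.range n, c ^ k * (v ^ k)⁻¹ + c ^ n * (v ^ n)⁻¹))
        = v * (v ^ n * (v / (v-c) - ∑ k ∈ Finset.range n, c ^ k * (v ^ k)⁻¹)) - v * c ^ n := by
      field_simp
      ring
    rw [e1, ih]
    field_simp
    ring

lemma term_le_exp (x : ℝ) (hx : 0 ≤ x) (n : ℕ) : x ^ n / n.factorial ≤ Real.exp x :=
  calc x ^ n / n.factorial ≤ ∑ i ∈ Finset.range (n+1), x ^ i / i.factorial := by
        refine Finset.single_le_sum (f := fun i => x ^ i / (i.factorial : ℝ)) ?_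
          (Finset.self_mem_range_succ n)
        intro i _; positivity
    _ ≤ Real.exp x := Real.sum_le_exp_of_nonneg hx _

lemma summable_master (q₀ q₁ q₂ z : ℝ) (hz : 0 < z) (M : ℕ) :
    Summable (fun p : ℕ × ℕ => |aCoef q₀ q₁ q₂ z p| * (1 + ((p.2 : ℝ) + 1) * z) ^ M) := by
  set E := Real.exp (Real.log q₀ / z) with hE
  have hEpos : 0 < E := Real.exp_pos _
  set x : ℝ := |q₁| * |q₂| / z ^ 2 with hx
  set y : ℝ := |q₂| / z with hy
  have hx0 : 0 ≤ x := by positivity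
  have hy0 : 0 ≤ y := by positivity
  have hF : Summable (fun d : ℕ => E * (x ^ d / d.factorial)) :=
    (Real.summable_pow_div_factorial x).mul_left E
  have hG : Summable (fun m : ℕ => y ^ (m+1) / (m+1).factorial * (1 + ((m : ℝ) + 1) * z) ^ M) := by
    have hgeo : Summable (fun n : ℕ => (n : ℝ) ^ M * (2⁻¹ : ℝ) ^ n) :=
      summable_pow_mul_geometric_of_norm_lt_one M
        (by rw [Real.norm_eq_abs, abs_of_pos (by norm_num : (0:ℝ) < 2⁻¹)]; norm_num)
    have hgeo' : Summable (fun m : ℕ => ((m : ℝ) + 1) ^ M * (2⁻¹ : ℝ) ^ (m+1)) := by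
      have h := hgeo.comp_injective Nat.succ_injective
      refine h.congr fun m => ?_
      simp [Function.comp, Nat.succ_eq_add_one]
    refine Summable.of_nonneg_of_le (fun m => by positivity) (fun m => ?_)
      ((hgeo'.mul_left (Real.exp (2*y) * (1+z) ^ M)))
    have h1 : y ^ (m+1) / (m+1).factorial ≤ Real.exp (2*y) * (2⁻¹:ℝ) ^ (m+1) := by
      have e : y ^ (m+1) / (m+1).factorial
          = ((2*y) ^ (m+1) / (m+1).factorial) * (2⁻¹:ℝ) ^ (m+1) := by
        have h21 : ((2:ℝ)) ^ (m+1) * (2⁻¹:ℝ) ^ (m+1) = 1 := by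
          rw [← mul_pow]; norm_num
        calc y ^ (m+1) / ((m+1).factorial : ℝ)
            = ((2:ℝ) ^ (m+1) * (2⁻¹:ℝ) ^ (m+1)) * y ^ (m+1) / (m+1).factorial := by
              rw [h21, one_mul]
          _ = ((2*y) ^ (m+1) / (m+1).factorial) * (2⁻¹:ℝ) ^ (m+1) := by
              rw [mul_pow]; ring
      rw [e]
      exact mul_le_mul_of_nonneg_right (term_le_exp (2*y) (by positivity) _) (by positivity)
    have h2 : (1 + ((m : ℝ) + 1) * z) ^ M ≤ (1+z) ^ M * ((m : ℝ) + 1) ^ M := by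
      rw [← mul_pow]
      refine pow_le_pow_left₀ (by positivity) ?_ M
      have hm0 : (0:ℝ) ≤ (m : ℝ) := Nat.cast_nonneg m
      nlinarith
    calc y ^ (m+1) / (m+1).factorial * (1 + ((m : ℝ) + 1) * z) ^ M
        ≤ (Real.exp (2*y) * (2⁻¹:ℝ) ^ (m+1)) * ((1+z) ^ M * ((m : ℝ) + 1) ^ M) :=
          mul_le_mul h1 h2 (by positivity) (by positivity)
      _ = Real.exp (2*y) * (1+z) ^ M * (((m : ℝ) + 1) ^ M * (2⁻¹:ℝ) ^ (m+1)) := by ring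
  have hFG := hF.mul_of_nonneg hG (fun d => by positivity) (fun m => by positivity)
  refine Summable.of_nonneg_of_le (fun p => by positivity) (fun p => ?_) hFG
  obtain ⟨d, m⟩ := p
  simp only
  have hEnn : (0:ℝ) ≤ E := le_of_lt hEpos
  have habs : |aCoef q₀ q₁ q₂ z (d, m)|
      = E * (|q₁| ^ d * |q₂| ^ (d + (m+1)) /
        ((d.factorial : ℝ) * (d + (m+1)).factorial * z ^ (2 * d + (m+1)))) := by
    rw [aCoef, abs_mul, abs_of_pos hEpos, abs_div, abs_mul, abs_mul, abs_pow, abs_pow,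
      abs_pow, abs_neg, abs_one, one_pow, mul_one, abs_mul, abs_mul,
      Nat.abs_cast, Nat.abs_cast, abs_pow, abs_of_pos hz]
  rw [habs]
  have e3 : x ^ d / d.factorial * (y ^ (m+1) / (m+1).factorial)
      = |q₁| ^ d * |q₂| ^ (d + (m+1)) /
        ((d.factorial : ℝ) * (m+1).factorial * z ^ (2 * d + (m+1))) := by
    rw [hx, hy]
    have e1 : |q₂| ^ (d + (m+1)) = |q₂| ^ d * |q₂| ^ (m+1) := pow_add _ _ _
    have e2 : z ^ (2 * d + (m+1)) = (z ^ 2) ^ d * z ^ (m+1) := by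
      rw [pow_add, pow_mul]
    rw [e1, e2, div_pow, div_pow]
    ring
  have key : |q₁| ^ d * |q₂| ^ (d + (m+1)) /
        ((d.factorial : ℝ) * (d + (m+1)).factorial * z ^ (2 * d + (m+1)))
      ≤ x ^ d / d.factorial * (y ^ (m+1) / (m+1).factorial) := by
    rw [e3]
    have hfle : ((m+1).factorial : ℝ) ≤ ((d + (m+1)).factorial : ℝ) := by
      exact_mod_cast Nat.factorial_le (Nat.le_add_left _ _)
    gcongr
  calc E * (|q₁| ^ d * |q₂| ^ (d + (m+1)) /
        ((d.factorial : ℝ) * (d + (m+1)).factorial * z ^ (2 * d + (m+1)))) *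
        (1 + ((m : ℝ) + 1) * z) ^ M
      ≤ E * (x ^ d / d.factorial * (y ^ (m+1) / (m+1).factorial)) *
        (1 + ((m : ℝ) + 1) * z) ^ M := by
        exact mul_le_mul_of_nonneg_right (mul_le_mul_of_nonneg_left key hEnn) (by positivity)
    _ = E * (x ^ d / d.factorial) *
        (y ^ (m+1) / (m+1).factorial * (1 + ((m : ℝ) + 1) * z) ^ M) := by ring

lemma denom_ne (z : ℝ) (hz : 0 < z) (l m : ℕ) :
    (((l:ℝ) + 1/2) * z) - ((m:ℝ) + 1) * z ≠ 0 := by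
  have e : (((l:ℝ) + 1/2) * z) - ((m:ℝ) + 1) * z = (((l:ℝ) + 1/2) - ((m:ℝ) + 1)) * z := by ring
  rw [e]
  refine mul_ne_zero ?_ (ne_of_gt hz)
  rcases le_or_gt (m + 1) l with h | h
  · have : ((m:ℝ) + 1) ≤ (l:ℝ) := by exact_mod_cast h
    intro hc; nlinarith
  · have : (l:ℝ) ≤ (m:ℝ) := by exact_mod_cast Nat.lt_succ_iff.mp h
    intro hc; nlinarith

lemma ratio_bound (z : ℝ) (hz : 0 < z) (l m : ℕ) :
    |(((l:ℝ) + 1/2) * z) / ((((l:ℝ) + 1/2) * z) - ((m:ℝ) + 1) * z)| ≤ 2 * ((m:ℝ) + 1) + 1 := by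
  have e : (((l:ℝ) + 1/2) * z) / ((((l:ℝ) + 1/2) * z) - ((m:ℝ) + 1) * z)
      = ((l:ℝ) + 1/2) / (((l:ℝ) + 1/2) - ((m:ℝ) + 1)) := by
    rw [show (((l:ℝ) + 1/2) * z) - ((m:ℝ) + 1) * z = (((l:ℝ) + 1/2) - ((m:ℝ) + 1)) * z by ring,
      mul_div_mul_right _ _ (ne_of_gt hz)]
  rw [e, abs_div, abs_of_pos (by positivity : (0:ℝ) < (l:ℝ) + 1/2)]
  have hm0 : (0:ℝ) ≤ (m:ℝ) := Nat.cast_nonneg m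
  rcases le_or_gt (m + 1) l with h | h
  · have hml : ((m:ℝ) + 1) ≤ (l:ℝ) := by exact_mod_cast h
    rw [abs_of_pos (by linarith : (0:ℝ) < ((l:ℝ) + 1/2) - ((m:ℝ) + 1)),
      div_le_iff₀ (by linarith)]
    nlinarith
  · have hlm : (l:ℝ) ≤ (m:ℝ) := by exact_mod_cast Nat.lt_succ_iff.mp h
    rw [abs_of_neg (by linarith : ((l:ℝ) + 1/2) - ((m:ℝ) + 1) < 0),
      div_le_iff₀ (by linarith : (0:ℝ) < -(((l:ℝ) + 1/2) - ((m:ℝ) + 1)))]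
    nlinarith

theorem stmt_11 (q₀ q₁ q₂ z : ℝ) (hq₀ : 0 < q₀) (hz : 0 < z) (N : ℕ)
    (hN : phiCoeff q₀ q₁ q₂ z N ≠ 0) :
    Tendsto (fun l : ℕ =>
        (((l : ℝ) + 1 / 2) * z) ^ N *
          (Isq q₀ q₁ q₂ (((l : ℝ) + 1 / 2) * z) z -
            ∑ k ∈ Finset.range N, phiCoeff q₀ q₁ q₂ z k * (((l : ℝ) + 1 / 2) * z) ^ (-(k : ℤ))))
      atTop (nhds (phiCoeff q₀ q₁ q₂ z N)) := by
  set a : ℕ × ℕ → ℝ := aCoef q₀ q₁ q₂ z with ha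
  set v : ℕ → ℝ := fun l => ((l : ℝ) + 1/2) * z with hvdef
  set c : ℕ × ℕ → ℝ := fun p => ((p.2 : ℝ) + 1) * z with hcdef
  have hv0 : ∀ l, 0 < v l := fun l => by
    have : (0:ℝ) < (l:ℝ) + 1/2 := by positivity
    exact mul_pos this hz
  have hvne : ∀ l, v l ≠ 0 := fun l => ne_of_gt (hv0 l)
  have hvc : ∀ l (p : ℕ × ℕ), v l - c p ≠ 0 := fun l p => denom_ne z hz l p.2
  have hc0 : ∀ p : ℕ × ℕ, 0 ≤ c p := fun p => by
    have : (0:ℝ) ≤ (p.2:ℝ) + 1 := by positivity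
    exact mul_nonneg this hz.le
  have hrb : ∀ l (p : ℕ × ℕ), |v l / (v l - c p)| ≤ 2 * ((p.2:ℝ) + 1) + 1 :=
    fun l p => ratio_bound z hz l p.2
  -- polynomial bound
  have h2mu : ∀ p : ℕ × ℕ, 2 * ((p.2:ℝ) + 1) + 1 ≤ (1 + 2/z) * (1 + c p) := by
    intro p
    have hcz : c p = ((p.2:ℝ) + 1) * z := rfl
    have e : (1 + 2/z) * (1 + ((p.2:ℝ) + 1) * z)
        = 1 + ((p.2:ℝ) + 1) * z + 2/z + 2 * ((p.2:ℝ) + 1) := by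
      field_simp
      ring
    rw [hcz, e]
    have t1 : 0 < ((p.2:ℝ) + 1) * z := mul_pos (by positivity) hz
    have t2 : (0:ℝ) < 2/z := by positivity
    linarith
  have hpoly : ∀ p : ℕ × ℕ, (2 * ((p.2:ℝ) + 1) + 1) * (c p) ^ N
      ≤ (1 + 2/z) * (1 + c p) ^ (N + 1) := by
    intro p
    have h1 : (c p) ^ N ≤ (1 + c p) ^ N := pow_le_pow_left₀ (hc0 p) (by linarith [hc0 p]) N
    calc (2 * ((p.2:ℝ) + 1) + 1) * (c p) ^ N
        ≤ ((1 + 2/z) * (1 + c p)) * (1 + c p) ^ N :=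
          mul_le_mul (h2mu p) h1 (pow_nonneg (hc0 p) N) (by positivity)
      _ = (1 + 2/z) * (1 + c p) ^ (N + 1) := by rw [pow_succ]; ring
  -- summability facts
  have hmaster : ∀ M : ℕ, Summable (fun p : ℕ × ℕ => |a p| * (1 + c p) ^ M) :=
    fun M => summable_master q₀ q₁ q₂ z hz M
  have hS1 : ∀ k : ℕ, Summable (fun p : ℕ × ℕ => a p * (c p) ^ k) := by
    intro k
    refine Summable.of_norm_bounded (hmaster k) fun p => ?_
    rw [Real.norm_eq_abs, abs_mul, abs_pow, abs_of_nonneg (hc0 p)]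
    exact mul_le_mul_of_nonneg_left
      (pow_le_pow_left₀ (hc0 p) (by linarith [hc0 p]) k) (abs_nonneg _)
  have hg_sum : Summable (fun p : ℕ × ℕ => (1 + 2/z) * (|a p| * (1 + c p) ^ (N + 1))) :=
    (hmaster (N + 1)).mul_left _
  have hbnd : ∀ l (p : ℕ × ℕ),
      ‖a p * (v l / (v l - c p)) * (c p) ^ N‖ ≤ (1 + 2/z) * (|a p| * (1 + c p) ^ (N + 1)) := by
    intro l p
    rw [Real.norm_eq_abs, abs_mul, abs_mul, abs_pow, abs_of_nonneg (hc0 p)]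
    calc |a p| * |v l / (v l - c p)| * (c p) ^ N
        ≤ |a p| * ((2 * ((p.2:ℝ) + 1) + 1) * (c p) ^ N) := by
          rw [mul_assoc]
          exact mul_le_mul_of_nonneg_left
            (mul_le_mul_of_nonneg_right (hrb l p) (pow_nonneg (hc0 p) N)) (abs_nonneg _)
      _ ≤ |a p| * ((1 + 2/z) * (1 + c p) ^ (N + 1)) :=
          mul_le_mul_of_nonneg_left (hpoly p) (abs_nonneg _)
      _ = (1 + 2/z) * (|a p| * (1 + c p) ^ (N + 1)) := by ring
  have hSN : ∀ l, Summable (fun p : ℕ × ℕ => a p * (v l / (v l - c p)) * (c p) ^ N) :=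
    fun l => Summable.of_norm_bounded hg_sum (hbnd l)
  have hSI : ∀ l, Summable (fun p : ℕ × ℕ => a p * (v l / (v l - c p))) := by
    intro l
    refine Summable.of_norm_bounded ((hmaster 1).mul_left (1 + 2/z)) fun p => ?_
    rw [Real.norm_eq_abs, abs_mul]
    calc |a p| * |v l / (v l - c p)| ≤ |a p| * (2 * ((p.2:ℝ) + 1) + 1) :=
          mul_le_mul_of_nonneg_left (hrb l p) (abs_nonneg _)
      _ ≤ |a p| * ((1 + 2/z) * (1 + c p)) :=
          mul_le_mul_of_nonneg_left (h2mu p) (abs_nonneg _)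
      _ = (1 + 2/z) * (|a p| * (1 + c p) ^ 1) := by rw [pow_one]; ring
  -- rewriting Isq and phiCoeff in terms of a
  have hIsq : ∀ w : ℝ, Isq q₀ q₁ q₂ w z = ∑' p : ℕ × ℕ, a p * (w / (w - c p)) := by
    intro w
    refine tsum_congr fun p => ?_
    simp only [ha, aCoef, hcdef]
    ring
  have hphi : ∀ k : ℕ, phiCoeff q₀ q₁ q₂ z k = ∑' p : ℕ × ℕ, a p * (c p) ^ k := by
    intro k
    refine tsum_congr fun p => ?_
    simp only [ha, aCoef, hcdef, mul_pow]
    all_goals ring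
  -- key identity
  have key : ∀ l : ℕ, v l ^ N *
      (Isq q₀ q₁ q₂ (v l) z - ∑ k ∈ Finset.range N, phiCoeff q₀ q₁ q₂ z k * (v l) ^ (-(k:ℤ)))
      = ∑' p : ℕ × ℕ, a p * (v l / (v l - c p)) * (c p) ^ N := by
    intro l
    have hSk : ∀ k : ℕ, Summable (fun p : ℕ × ℕ => a p * ((c p) ^ k * ((v l) ^ k)⁻¹)) := by
      intro k
      refine ((hS1 k).mul_right (((v l) ^ k)⁻¹)).congr fun p => ?_
      ring
    have hSsum : Summable (fun p : ℕ × ℕ =>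
        ∑ k ∈ Finset.range N, a p * ((c p) ^ k * ((v l) ^ k)⁻¹)) :=
      summable_sum fun k _ => hSk k
    have hsum : ∑ k ∈ Finset.range N, phiCoeff q₀ q₁ q₂ z k * (v l) ^ (-(k:ℤ))
        = ∑' p : ℕ × ℕ, ∑ k ∈ Finset.range N, a p * ((c p) ^ k * ((v l) ^ k)⁻¹) :=
      calc ∑ k ∈ Finset.range N, phiCoeff q₀ q₁ q₂ z k * (v l) ^ (-(k:ℤ))
          = ∑ k ∈ Finset.range N, ∑' p : ℕ × ℕ, a p * ((c p) ^ k * ((v l) ^ k)⁻¹) := by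
            refine Finset.sum_congr rfl fun k _ => ?_
            rw [hphi k, zpow_neg, zpow_natCast, ← tsum_mul_right]
            exact tsum_congr fun p => by ring
        _ = ∑' p : ℕ × ℕ, ∑ k ∈ Finset.range N, a p * ((c p) ^ k * ((v l) ^ k)⁻¹) :=
            (Summable.tsum_finsetSum fun k _ => hSk k).symm
    rw [hIsq (v l), hsum, ← Summable.tsum_sub (hSI l) hSsum, ← tsum_mul_left]
    refine tsum_congr fun p => ?_
    have hgt := geom_tail (v l) (c p) (hvne l) (hvc l p) N
    calc v l ^ N * (a p * (v l / (v l - c p)) -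
          ∑ k ∈ Finset.range N, a p * ((c p) ^ k * ((v l) ^ k)⁻¹))
        = a p * (v l ^ N * (v l / (v l - c p) -
            ∑ k ∈ Finset.range N, (c p) ^ k * ((v l) ^ k)⁻¹)) := by
          rw [← Finset.mul_sum]; ring
      _ = a p * (v l / (v l - c p) * (c p) ^ N) := by rw [hgt]
      _ = a p * (v l / (v l - c p)) * (c p) ^ N := by ring
  -- pointwise limits
  have hvtop : Tendsto v atTop atTop := by
    have h1 : Tendsto (fun l : ℕ => (l : ℝ) + 1/2) atTop atTop :=
      tendsto_atTop_add_const_right _ _ tendsto_natCast_atTop_atTop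
    exact h1.atTop_mul_const hz
  have hpoint : ∀ p : ℕ × ℕ, Tendsto (fun l => a p * (v l / (v l - c p)) * (c p) ^ N)
      atTop (nhds (a p * (c p) ^ N)) := by
    intro p
    have h0 : Tendsto (fun l => c p / v l) atTop (nhds 0) :=
      Tendsto.div_atTop tendsto_const_nhds hvtop
    have h2 : Tendsto (fun l => (v l - c p) / v l) atTop (nhds 1) := by
      have e : (fun l => (v l - c p) / v l) = fun l => 1 - c p / v l := by
        funext l; rw [sub_div, div_self (hvne l)]
      rw [e]
      simpa using tendsto_const_nhds.sub h0
    have h1 : Tendsto (fun l => v l / (v l - c p)) atTop (nhds 1) := by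
      have := h2.inv₀ one_ne_zero
      simpa [inv_div] using this
    have := (h1.const_mul (a p)).mul_const ((c p) ^ N)
    simpa using this
  -- conclude
  have heq : (fun l : ℕ =>
      (((l : ℝ) + 1 / 2) * z) ^ N *
        (Isq q₀ q₁ q₂ (((l : ℝ) + 1 / 2) * z) z -
          ∑ k ∈ Finset.range N, phiCoeff q₀ q₁ q₂ z k * (((l : ℝ) + 1 / 2) * z) ^ (-(k : ℤ))))
      = fun l => ∑' p : ℕ × ℕ, a p * (v l / (v l - c p)) * (c p) ^ N := funext key
  rw [heq, hphi N]
  exact tendsto_tsum_of_dominated_convergence hg_sum hpoint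
    (Eventually.of_forall fun l => hbnd l)
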